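/- arXiv:0709.2282 — 2 statements merged into one kernel-verified Lean document; each statement's English description precedes it below -/
import Mathlib

section
/- If ζ ∈ ℂ³ is nonzero and satisfies ζ·ζ = 0, then the 4×4 matrix P₀(ζ) has rank 2, and consequently ker P₀(ζ) = im P₀(ζ). -/
/-!
By the Clifford relation (σ·ζ)² = (ζ·ζ) I, the condition ζ·ζ = 0 makes P₀(ζ) square to zero,
so im P₀(ζ) ⊆ ker P₀(ζ) and rank–nullity bounds the rank by 2. Conversely, since σ·ζ ≠ 0 for
ζ ≠ 0, a nonzero entry of σ·ζ in each off-diagonal block yields an invertible 2 × 2 minor of P₀(ζ),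
so the rank is exactly 2, and then ker and im have the same dimension.
-/

open Matrix

noncomputable def σ1 : Matrix (Fin 2) (Fin 2) ℂ := !![0, 1; 1, 0]
noncomputable def σ2 : Matrix (Fin 2) (Fin 2) ℂ := !![0, -Complex.I; Complex.I, 0]
noncomputable def σ3 : Matrix (Fin 2) (Fin 2) ℂ := !![1, 0; 0, -1]

/-- Pauli contraction σ·a = a₁σ₁ + a₂σ₂ + a₃σ₃. -/
noncomputable def sdot (a : Fin 3 → ℂ) : Matrix (Fin 2) (Fin 2) ℂ :=
  a 0 • σ1 + a 1 • σ2 + a 2 • σ3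

/-- The 4×4 Pauli Dirac symbol P₀(a) = [[0, σ·a],[σ·a, 0]]. -/
noncomputable def P0 (a : Fin 3 → ℂ) : Matrix (Fin 2 ⊕ Fin 2) (Fin 2 ⊕ Fin 2) ℂ :=
  Matrix.fromBlocks 0 (sdot a) (sdot a) 0

/-- Bilinear dot product on ℂ³ (no conjugation). -/
noncomputable def cdot {n : ℕ} (a b : Fin n → ℂ) : ℂ := ∑ i, a i * b i

/-- Block diagonal matrix diag(qp I₂, qm I₂). -/
noncomputable def Qmat (qp qm : ℂ) : Matrix (Fin 2 ⊕ Fin 2) (Fin 2 ⊕ Fin 2) ℂ :=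
  Matrix.fromBlocks (qp • 1) 0 0 (qm • 1)

namespace Matrix

variable {K m n : Type*} [Field K] [Fintype n]

theorem ker_mulVecLin_eq_range_of_mul_self_eq_zero {A : Matrix n n K} (hA : A * A = 0)
    (hrank : 2 * A.rank = Fintype.card n) :
    LinearMap.ker A.mulVecLin = LinearMap.range A.mulVecLin := by
  have hle : LinearMap.range A.mulVecLin ≤ LinearMap.ker A.mulVecLin := by
    rw [LinearMap.range_le_ker_iff, ← mulVecLin_mul, hA, mulVecLin_zero]
  have hdim := LinearMap.finrank_range_add_finrank_ker A.mulVecLin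
  rw [Module.finrank_fintype_fun_eq_card] at hdim
  rw [rank] at hrank
  exact (Submodule.eq_of_le_of_finrank_le hle (by omega)).symm

theorem two_le_rank_fromBlocks_zero_zero [Fintype m] {B : Matrix m n K} {C : Matrix n m K}
    (hB : B ≠ 0) (hC : C ≠ 0) : 2 ≤ (fromBlocks 0 B C 0).rank := by
  obtain ⟨i, j, hij⟩ : ∃ i j, B i j ≠ 0 := by simpa [← Matrix.ext_iff] using hB
  obtain ⟨k, l, hkl⟩ : ∃ k l, C k l ≠ 0 := by simpa [← Matrix.ext_iff] using hC
  have hminor : (fromBlocks 0 B C 0).submatrix ![Sum.inl i, Sum.inr k] ![Sum.inr j, Sum.inl l]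
      = !![B i j, 0; 0, C k l] := by
    ext a b
    fin_cases a <;> fin_cases b <;> rfl
  have hdet : (!![B i j, 0; 0, C k l]).det ≠ 0 := by
    simpa [det_fin_two] using mul_ne_zero hij hkl
  calc 2 = (!![B i j, 0; 0, C k l]).rank := by rw [rank_of_det_ne_zero hdet, Fintype.card_fin]
    _ ≤ _ := hminor ▸ rank_submatrix_le _ _ _

end Matrix

theorem sdot_eq (a : Fin 3 → ℂ) :
    sdot a = !![a 2, a 0 - Complex.I * a 1; a 0 + Complex.I * a 1, -a 2] := by
  ext i j
  fin_cases i <;> fin_cases j <;> simp [sdot, σ1, σ2, σ3] <;> ring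

theorem sdot_mul_self (a : Fin 3 → ℂ) : sdot a * sdot a = cdot a a • 1 := by
  rw [sdot_eq, mul_fin_two, one_fin_two, cdot, Fin.sum_univ_three]
  ext i j
  fin_cases i <;> fin_cases j <;> simp <;> ring_nf <;> simp only [Complex.I_sq] <;> ring

theorem sdot_eq_zero_iff {a : Fin 3 → ℂ} : sdot a = 0 ↔ a = 0 := by
  refine ⟨fun h => ?_, fun h => by simp [sdot, h]⟩
  rw [sdot_eq] at h
  have h00 : a 2 = 0 := by simpa using congrFun₂ h 0 0
  have h01 : a 0 - Complex.I * a 1 = 0 := by simpa using congrFun₂ h 0 1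
  have h10 : a 0 + Complex.I * a 1 = 0 := by simpa using congrFun₂ h 1 0
  have h0 : a 0 = 0 := by linear_combination (h01 + h10) / 2
  have h1 : a 1 = 0 := by
    simpa [Complex.I_ne_zero] using (by linear_combination h10 - h01 : Complex.I * (2 * a 1) = 0)
  ext k
  fin_cases k <;> assumption

theorem P0_mul_self (a : Fin 3 → ℂ) : P0 a * P0 a = cdot a a • 1 := by
  rw [P0, fromBlocks_multiply, sdot_mul_self, ← fromBlocks_one, fromBlocks_smul]
  simp

/-- If ζ ≠ 0 and ζ·ζ = 0, then P₀(ζ) has rank 2 and ker P₀(ζ) = im P₀(ζ). -/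
theorem pauliDirac_rank_two (ζ : Fin 3 → ℂ) (hζ0 : ζ ≠ 0) (hζ : cdot ζ ζ = 0) :
    (P0 ζ).rank = 2 ∧
    LinearMap.ker (P0 ζ).mulVecLin = LinearMap.range (P0 ζ).mulVecLin := by
  have hsq : P0 ζ * P0 ζ = 0 := by rw [P0_mul_self, hζ, zero_smul]
  have hS : sdot ζ ≠ 0 := sdot_eq_zero_iff.not.mpr hζ0
  have hrank : (P0 ζ).rank = 2 := by
    have hle := rank_add_rank_le_card_of_mul_eq_zero hsq
    have hge := two_le_rank_fromBlocks_zero_zero hS hS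
    simp only [Fintype.card_sum, Fintype.card_fin] at hle
    rw [P0] at hle ⊢
    omega
  exact ⟨hrank, ker_mulVecLin_eq_range_of_mul_self_eq_zero hsq (by simp [hrank])⟩
end

section
/- Let ζ = t + iν with t, ν ∈ ℝ³ orthogonal unit vectors, so ζ·ζ = 0 and |ζ|² = 2. For any A ∈ ℝ³ with A·ν = 0 and any Q = diag(q₊I₂, q₋I₂) with q₊, q₋ ∈ ℂ: if P₀(ζ̄)(P₀(A)+Q)P₀(ζ) = 0 and P₀(ζ)(P₀(A)+Q)P₀(ζ̄) = 0, then −P₀(A) + (A·t)P₀(t) + Q_I = 0. -/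
/-!
Blockwise, P₀(ζ̄)(P₀(A) + Q)P₀(ζ) has diagonal blocks q₋(σ·ζ̄)(σ·ζ), q₊(σ·ζ̄)(σ·ζ) and
off-diagonal blocks (σ·ζ̄)(σ·A)(σ·ζ). By the Pauli identity (σ·a)(σ·b) = (a·b) + iσ·(a×b),
the matrix (σ·ζ̄)(σ·ζ) has scalar part ζ̄·ζ = |t|² + |ν|² = 2 ≠ 0, so q₊ = q₋ = 0. The vector
part of the triple product (σ·ζ̄)(σ·A)(σ·ζ) is (ζ̄·A)ζ - (ζ̄·ζ)A + (A·ζ)ζ̄ = 2(A·t)t - 2A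
because A·ν = 0, so A = (A·t)t and P₀(A) = (A·t)P₀(t).
-/

open Matrix

open Complex

section Pauli

variable (a b c : Fin 3 → ℂ)

lemma sdot_smul (x : ℂ) : sdot (x • a) = x • sdot a := by
  simp only [sdot, Pi.smul_apply, smul_eq_mul, smul_add, smul_smul]

lemma P0_smul (x : ℂ) : P0 (x • a) = x • P0 a := by
  simp only [P0, sdot_smul, fromBlocks_smul, smul_zero]

lemma Qmat_zero : Qmat 0 0 = 0 := by
  simp [Qmat]

lemma sdot_mul_sdot :
    sdot a * sdot b = (a ⬝ᵥ b) • 1 + sdot (I • a ⨯₃ b) := by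
  ext i j
  fin_cases i <;> fin_cases j <;>
    simp [sdot, σ1, σ2, σ3, cross_apply, dotProduct, Fin.sum_univ_three] <;> ring_nf <;>
    simp [I_sq] <;> ring

lemma sdot_mul_sdot_mul_sdot :
    sdot a * sdot b * sdot c = (I * a ⬝ᵥ b ⨯₃ c) • 1
      + sdot ((a ⬝ᵥ b) • c - (a ⬝ᵥ c) • b + (b ⬝ᵥ c) • a) := by
  ext i j
  fin_cases i <;> fin_cases j <;>
    simp [sdot, σ1, σ2, σ3, cross_apply, dotProduct, Fin.sum_univ_three, Matrix.mul_apply,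
      Fin.sum_univ_two] <;> ring_nf <;>
    simp [I_sq] <;> ring

lemma eq_zero_of_smul_one_add_sdot_eq_zero {x : ℂ} {v : Fin 3 → ℂ}
    (h : x • (1 : Matrix (Fin 2) (Fin 2) ℂ) + sdot v = 0) : x = 0 ∧ v = 0 := by
  have entry (i j : Fin 2) := congrFun (congrFun h i) j
  have h00 : x + v 2 = 0 := by simpa [sdot, σ1, σ2, σ3] using entry 0 0
  have h01 : v 0 - v 1 * I = 0 := by simpa [sdot, σ1, σ2, σ3, sub_eq_add_neg] using entry 0 1
  have h10 : v 0 + v 1 * I = 0 := by simpa [sdot, σ1, σ2, σ3] using entry 1 0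
  have h11 : x - v 2 = 0 := by simpa [sdot, σ1, σ2, σ3, sub_eq_add_neg] using entry 1 1
  refine ⟨by linear_combination (h00 + h11) / 2, ?_⟩
  ext i
  fin_cases i
  · show v 0 = 0
    linear_combination (h01 + h10) / 2
  · show v 1 = 0
    linear_combination (-I / 2) * (h10 - h01) + v 1 * I_sq
  · show v 2 = 0
    linear_combination (h00 - h11) / 2

lemma P0_mul_add_Qmat_mul_P0 (qp qm : ℂ) :
    P0 a * (P0 c + Qmat qp qm) * P0 b =
      fromBlocks (qm • (sdot a * sdot b)) (sdot a * sdot c * sdot b)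
        (sdot a * sdot c * sdot b) (qp • (sdot a * sdot b)) := by
  simp [P0, Qmat, fromBlocks_add, fromBlocks_multiply]

variable {a b c} in
lemma eq_zero_of_P0_mul_add_Qmat_mul_P0_eq_zero {qp qm : ℂ} (hab : a ⬝ᵥ b ≠ 0)
    (h : P0 a * (P0 c + Qmat qp qm) * P0 b = 0) :
    qp = 0 ∧ qm = 0 ∧ (a ⬝ᵥ c) • b - (a ⬝ᵥ b) • c + (c ⬝ᵥ b) • a = 0 := by
  rw [P0_mul_add_Qmat_mul_P0, ← fromBlocks_zero, fromBlocks_inj] at h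
  obtain ⟨hqm, hvec, -, hqp⟩ := h
  have hne : sdot a * sdot b ≠ 0 := by
    rw [sdot_mul_sdot]
    exact fun h => hab (eq_zero_of_smul_one_add_sdot_eq_zero h).1
  rw [sdot_mul_sdot_mul_sdot] at hvec
  exact ⟨(smul_eq_zero.1 hqp).resolve_right hne, (smul_eq_zero.1 hqm).resolve_right hne,
    (eq_zero_of_smul_one_add_sdot_eq_zero hvec).2⟩

end Pauli

section Complexification

variable {ι : Type*} [Fintype ι] (t ν A : ι → ℝ)

lemma ofReal_sub_I_mul_dotProduct_ofReal_add_I_mul :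
    (fun i => (t i : ℂ) - I * ν i) ⬝ᵥ (fun i => (t i : ℂ) + I * ν i)
      = ((∑ i, t i ^ 2 + ∑ i, ν i ^ 2 : ℝ) : ℂ) := by
  push_cast
  rw [← Finset.sum_add_distrib]
  refine Finset.sum_congr rfl fun i _ => ?_
  linear_combination (-(ν i : ℂ) ^ 2) * I_sq

lemma ofReal_sub_I_mul_dotProduct_ofReal :
    (fun i => (t i : ℂ) - I * ν i) ⬝ᵥ (fun i => (A i : ℂ))
      = ((∑ i, A i * t i : ℝ) : ℂ) - I * ((∑ i, A i * ν i : ℝ) : ℂ) := by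
  push_cast
  rw [Finset.mul_sum, ← Finset.sum_sub_distrib]
  exact Finset.sum_congr rfl fun i _ => by ring

lemma ofReal_dotProduct_ofReal_add_I_mul :
    (fun i => (A i : ℂ)) ⬝ᵥ (fun i => (t i : ℂ) + I * ν i)
      = ((∑ i, A i * t i : ℝ) : ℂ) + I * ((∑ i, A i * ν i : ℝ) : ℂ) := by
  push_cast
  rw [Finset.mul_sum, ← Finset.sum_add_distrib]
  exact Finset.sum_congr rfl fun i _ => by ring

end Complexification

theorem boundary_determination_core_general (t ν : Fin 3 → ℝ)
    (ht : ∑ i, t i ^ 2 = 1) (hν : ∑ i, ν i ^ 2 = 1)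
    (A : Fin 3 → ℝ) (hAν : ∑ i, A i * ν i = 0) (qp qm : ℂ)
    (h1 : P0 (fun i => (t i : ℂ) - Complex.I * ν i) *
            (P0 (fun i => (A i : ℂ)) + Qmat qp qm) *
            P0 (fun i => (t i : ℂ) + Complex.I * ν i) = 0) :
    -P0 (fun i => (A i : ℂ)) + ((∑ i, A i * t i : ℝ) : ℂ) • P0 (fun i => (t i : ℂ))
      + Qmat qm qp = 0 := by
  have hζ : (fun i => (t i : ℂ) - I * ν i) ⬝ᵥ (fun i => (t i : ℂ) + I * ν i) = 2 := by
    rw [ofReal_sub_I_mul_dotProduct_ofReal_add_I_mul, ht, hν]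
    norm_num
  obtain ⟨rfl, rfl, hvec⟩ :=
    eq_zero_of_P0_mul_add_Qmat_mul_P0_eq_zero (by rw [hζ]; norm_num) h1
  rw [hζ, ofReal_sub_I_mul_dotProduct_ofReal, ofReal_dotProduct_ofReal_add_I_mul, hAν,
    ofReal_zero, mul_zero, sub_zero, add_zero] at hvec
  have hA : (fun i => (A i : ℂ)) = ((∑ i, A i * t i : ℝ) : ℂ) • fun i => (t i : ℂ) := by
    funext i
    have hi := congrFun hvec i
    simp only [Pi.add_apply, Pi.sub_apply, Pi.smul_apply, smul_eq_mul, Pi.zero_apply] at hi ⊢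
    linear_combination hi / (-2)
  rw [hA, P0_smul, Qmat_zero]
  abel

/-- Algebraic core of boundary determination: with ζ = t + iν for orthonormal t, ν and
A·ν = 0, the two sandwich identities imply −P₀(A) + (A·t)P₀(t) + Q_I = 0. -/
theorem boundary_determination_core (t ν : Fin 3 → ℝ)
    (ht : ∑ i, t i ^ 2 = 1) (hν : ∑ i, ν i ^ 2 = 1) (htν : ∑ i, t i * ν i = 0)
    (A : Fin 3 → ℝ) (hAν : ∑ i, A i * ν i = 0) (qp qm : ℂ)
    (h1 : P0 (fun i => (t i : ℂ) - Complex.I * ν i) *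
            (P0 (fun i => (A i : ℂ)) + Qmat qp qm) *
            P0 (fun i => (t i : ℂ) + Complex.I * ν i) = 0)
    (h2 : P0 (fun i => (t i : ℂ) + Complex.I * ν i) *
            (P0 (fun i => (A i : ℂ)) + Qmat qp qm) *
            P0 (fun i => (t i : ℂ) - Complex.I * ν i) = 0) :
    -P0 (fun i => (A i : ℂ)) + ((∑ i, A i * t i : ℝ) : ℂ) • P0 (fun i => (t i : ℂ))
      + Qmat qm qp = 0 :=
  boundary_determination_core_general t ν ht hν A hAν qp qm h1
end
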